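/- (Corollary 3 iii–iv) In the compound multinomial model, if E[Y1_1^2], E[Y2_1^2], E[Y3_1^2], E[Y4_1^2] are all finite, then E[S1·S2] = t·p0·E[Y3_1·Y4_1] + t(t − 1)·(p1·E[Y1_1] + p0·E[Y3_1])·(p2·E[Y2_1] + p0·E[Y4_1]), and hence cov(S1, S2) = t·[p0·E[Y3_1·Y4_1] − (p1·E[Y1_1] + p0·E[Y3_1])·(p2·E[Y2_1] + p0·E[Y4_1])]. -/

import Mathlib

open MeasureTheory ProbabilityTheory Finset

/-!
Given the counts `(B0, B1, B2) = (b0, b1, b2)`, which are independent of the summands, `S1` and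
`S2` are sums over `b1 + b2 + b0` independent units, and only the `b0` units carrying a pair
`(Y3, Y4)` contribute to both. Hence the conditional means are `b1 E[Y1] + b0 E[Y3]` and
`b2 E[Y2] + b0 E[Y4]`, and the conditional covariance is `b0 cov(Y3, Y4)`. Averaging these
polynomials in the counts over the multinomial law only needs `E[Bi] = t pi` and
`E[Bi Bj] = t (t - 1) pi pj + [i = j] t pi`, which follow from the shift identity
`(ki + 1) multinomial(k + ei) = (|k| + 1) multinomial(k)`.
-/

/-- `(B0, B1, B2)` has the multinomial distribution with parameters `t` and `(p0, p1, p2)`. -/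
def IsMultinomial {Ω : Type*} [MeasureSpace Ω] (t : ℕ) (p0 p1 p2 : ℝ)
    (B0 B1 B2 : Ω → ℕ) : Prop :=
  Measurable B0 ∧ Measurable B1 ∧ Measurable B2 ∧
  ∀ b0 b1 b2 : ℕ,
    (ℙ {ω | B0 ω = b0 ∧ B1 ω = b1 ∧ B2 ω = b2}).toReal =
      if b0 + b1 + b2 ≤ t then
        (Nat.factorial t : ℝ) /
          ((Nat.factorial b0 : ℝ) * (Nat.factorial b1 : ℝ) * (Nat.factorial b2 : ℝ) *
            (Nat.factorial (t - (b0 + b1 + b2)) : ℝ)) *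
          (p0 ^ b0 * p1 ^ b1 * p2 ^ b2 * (1 - (p0 + p1 + p2)) ^ (t - (b0 + b1 + b2)))
      else 0

section MultinomialWeight

variable {ι R : Type*} [Fintype ι]

noncomputable def multinomialWeight [CommSemiring R] (p : ι → R) (k : ι → ℕ) : R :=
  Nat.multinomial univ k * ∏ i, p i ^ k i

theorem Nat.cast_multinomial_univ (k : ι → ℕ) :
    (Nat.multinomial univ k : ℝ) = (∑ i, k i).factorial / ∏ i, ((k i).factorial : ℝ) := by
  rw [eq_div_iff (by positivity), mul_comm]
  exact_mod_cast Nat.multinomial_spec univ k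

variable [DecidableEq ι]

theorem sum_multinomialWeight [CommSemiring R] (p : ι → R) (n : ℕ) :
    ∑ k ∈ piAntidiag univ n, multinomialWeight p k = (∑ i, p i) ^ n :=
  (sum_pow_eq_sum_piAntidiag univ p n).symm

theorem sum_add_single_one_apply (k : ι → ℕ) (i : ι) :
    ∑ j, (k + Pi.single i 1 : ι → ℕ) j = ∑ j, k j + 1 := by
  simp [Finset.sum_add_distrib]

theorem prod_apply_add_single {M : Type*} [CommMonoid M] (f : ι → ℕ → M) (k : ι → ℕ) (i : ι) :
    ∏ j, f j ((k + Pi.single i 1 : ι → ℕ) j) = f i (k i + 1) * ∏ j ∈ univ.erase i, f j (k j) := by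
  rw [← mul_prod_erase univ _ (mem_univ i)]
  congr 1
  · simp
  · exact prod_congr rfl fun j hj => by simp [Pi.single_eq_of_ne (ne_of_mem_erase hj)]

theorem Nat.succ_mul_multinomial_add_single (k : ι → ℕ) (i : ι) :
    (k i + 1) * Nat.multinomial univ (k + Pi.single i 1) =
      (∑ j, k j + 1) * Nat.multinomial univ k := by
  have hprod : ∏ j, ((k + Pi.single i 1 : ι → ℕ) j).factorial =
      (k i + 1) * ∏ j, (k j).factorial := by
    rw [prod_apply_add_single (fun _ m => m.factorial), ← mul_prod_erase univ _ (mem_univ i),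
      Nat.factorial_succ, mul_assoc]
  apply Nat.eq_of_mul_eq_mul_left (Finset.prod_pos fun j _ => (k j).factorial_pos)
  calc (∏ j, (k j).factorial) * ((k i + 1) * Nat.multinomial univ (k + Pi.single i 1))
      = (∏ j, ((k + Pi.single i 1 : ι → ℕ) j).factorial) *
          Nat.multinomial univ (k + Pi.single i 1) := by
        rw [hprod]; ring
    _ = (∑ j, k j + 1) * ((∏ j, (k j).factorial) * Nat.multinomial univ k) := by
        rw [Nat.multinomial_spec, Nat.multinomial_spec, sum_add_single_one_apply,
          Nat.factorial_succ]
    _ = _ := by ring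

theorem succ_mul_multinomialWeight_add_single [CommSemiring R] (p : ι → R) (k : ι → ℕ) (i : ι) :
    (k i + 1 : R) * multinomialWeight p (k + Pi.single i 1) =
      (∑ j, k j + 1 : R) * p i * multinomialWeight p k := by
  have hcoef := congrArg (Nat.cast : ℕ → R) (Nat.succ_mul_multinomial_add_single k i)
  push_cast at hcoef
  rw [multinomialWeight, multinomialWeight, prod_apply_add_single (fun j m => p j ^ m),
    ← mul_prod_erase univ (fun j => p j ^ k j) (mem_univ i)]
  calc (k i + 1 : R) * (Nat.multinomial univ (k + Pi.single i 1) *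
        (p i ^ (k i + 1) * ∏ j ∈ univ.erase i, p j ^ k j))
      = ((k i + 1) * Nat.multinomial univ (k + Pi.single i 1)) *
          (p i * (p i ^ k i * ∏ j ∈ univ.erase i, p j ^ k j)) := by ring
    _ = _ := by rw [hcoef]; push_cast; ring

theorem sum_piAntidiag_add_single {M : Type*} [AddCommMonoid M] (i : ι) (n : ℕ)
    {g : (ι → ℕ) → M} (hg : ∀ k, k i = 0 → g k = 0) :
    ∑ k ∈ piAntidiag univ n, g (k + Pi.single i 1) = ∑ k ∈ piAntidiag univ (n + 1), g k := by
  refine sum_bij_ne_zero (fun k _ _ => k + Pi.single i 1) (fun k hk _ => ?_)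
    (fun _ _ _ _ _ _ h => add_right_cancel h) (fun k hk hgk => ?_) (fun _ _ _ => rfl)
  · rw [mem_piAntidiag] at hk ⊢
    exact ⟨by rw [sum_add_single_one_apply, hk.1], by simp⟩
  · have hki : k i ≠ 0 := fun h => hgk (hg k h)
    have hk' : k - Pi.single i 1 + Pi.single i 1 = k := by
      ext j
      by_cases hj : j = i
      · subst hj; simp; omega
      · simp [hj]
    refine ⟨k - Pi.single i 1, ?_, by rwa [hk'], hk'⟩
    have hsum := sum_add_single_one_apply (k - Pi.single i 1) i
    rw [hk', (mem_piAntidiag.1 hk).1] at hsum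
    exact mem_piAntidiag.2 ⟨Nat.add_right_cancel hsum.symm, by simp⟩

theorem sum_piAntidiag_succ_mul_multinomialWeight [CommSemiring R] (p : ι → R) (i : ι) (n : ℕ)
    (f : (ι → ℕ) → R) :
    ∑ k ∈ piAntidiag univ (n + 1), (k i : R) * f k * multinomialWeight p k =
      (n + 1) * p i * ∑ k ∈ piAntidiag univ n, f (k + Pi.single i 1) * multinomialWeight p k := by
  rw [← sum_piAntidiag_add_single i n (fun k hk => by simp [hk]), mul_sum]
  refine sum_congr rfl fun k hk => ?_
  have hw := succ_mul_multinomialWeight_add_single p k i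
  rw [(mem_piAntidiag.1 hk).1] at hw
  simp only [Pi.add_apply, Pi.single_eq_same, Nat.cast_add, Nat.cast_one]
  calc _ = f (k + Pi.single i 1) * ((k i + 1 : R) * multinomialWeight p (k + Pi.single i 1)) := by
        ring
    _ = _ := by rw [hw]; ring

theorem sum_mul_multinomialWeight [CommSemiring R] (p : ι → R) (i : ι) (n : ℕ) :
    ∑ k ∈ piAntidiag univ n, (k i : R) * multinomialWeight p k =
      n * p i * (∑ l, p l) ^ (n - 1) := by
  cases n with
  | zero => simp
  | succ n =>
    simpa [sum_multinomialWeight] using sum_piAntidiag_succ_mul_multinomialWeight p i n fun _ => 1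

theorem sum_mul_mul_multinomialWeight [CommSemiring R] (p : ι → R) (i j : ι) (n : ℕ) :
    ∑ k ∈ piAntidiag univ n, (k i : R) * k j * multinomialWeight p k =
      n * (n - 1 : ℕ) * p i * p j * (∑ l, p l) ^ (n - 2) +
        if i = j then n * p i * (∑ l, p l) ^ (n - 1) else 0 := by
  cases n with
  | zero => simp
  | succ n =>
    rw [sum_piAntidiag_succ_mul_multinomialWeight p i n fun k => (k j : R)]
    by_cases hij : i = j
    · subst hij
      simp only [Pi.add_apply, Pi.single_eq_same, Nat.cast_add, Nat.cast_one, add_mul, one_mul,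
        sum_add_distrib, sum_mul_multinomialWeight, sum_multinomialWeight, if_true]
      simp only [Nat.add_sub_cancel, Nat.reduceSubDiff]
      ring
    · simp only [Pi.add_apply, Pi.single_eq_of_ne (Ne.symm hij), add_zero,
        sum_mul_multinomialWeight, if_neg hij]
      simp only [Nat.add_sub_cancel, Nat.reduceSubDiff]
      push_cast
      ring

theorem sum_multinomialWeight_mul_linear [CommSemiring R] (p α : ι → R) (n : ℕ) :
    ∑ k ∈ piAntidiag univ n, multinomialWeight p k * ∑ i, α i * k i =
      n * (∑ i, α i * p i) * (∑ l, p l) ^ (n - 1) := by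
  calc _ = ∑ i, α i * ∑ k ∈ piAntidiag univ n, (k i : R) * multinomialWeight p k := by
        simp only [mul_sum]
        rw [sum_comm]
        exact sum_congr rfl fun i _ => sum_congr rfl fun k _ => by ring
    _ = _ := by
        simp only [sum_mul_multinomialWeight, sum_mul, mul_sum]
        exact sum_congr rfl fun i _ => by ring

theorem sum_multinomialWeight_mul_linear_mul_linear [CommSemiring R] (p α β : ι → R) (n : ℕ) :
    ∑ k ∈ piAntidiag univ n, multinomialWeight p k * ((∑ i, α i * k i) * ∑ j, β j * k j) =
      n * (n - 1 : ℕ) * (∑ i, α i * p i) * (∑ j, β j * p j) * (∑ l, p l) ^ (n - 2) +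
        n * (∑ i, α i * β i * p i) * (∑ l, p l) ^ (n - 1) := by
  calc _ = ∑ i, ∑ j, α i * β j *
        ∑ k ∈ piAntidiag univ n, (k i : R) * k j * multinomialWeight p k := by
        simp only [sum_mul_sum]
        simp only [mul_sum]
        rw [sum_comm]
        refine sum_congr rfl fun i _ => ?_
        rw [sum_comm]
        exact sum_congr rfl fun j _ => sum_congr rfl fun k _ => by ring
    _ = ∑ i, ∑ j, ((n * (n - 1 : ℕ) * (∑ l, p l) ^ (n - 2)) * ((α i * p i) * (β j * p j)) +
          if i = j then n * (∑ l, p l) ^ (n - 1) * (α i * β i * p i) else 0) := by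
        refine sum_congr rfl fun i _ => sum_congr rfl fun j _ => ?_
        rw [sum_mul_mul_multinomialWeight]
        split_ifs with hij
        · subst hij; ring
        · ring
    _ = _ := by
        simp only [sum_add_distrib, sum_ite_eq, mem_univ, if_true, ← mul_sum, ← sum_mul]
        ring

end MultinomialWeight

theorem ProbabilityTheory.iIndepFun.indepFun_none_some {Ω κ β : Type*} {mΩ : MeasurableSpace Ω}
    {μ : Measure Ω} [MeasurableSpace β] {F : Option κ → Ω → β} (h : iIndepFun F μ)
    (hF : ∀ i, Measurable (F i)) : IndepFun (F none) (fun ω x => F (some x) ω) μ := by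
  rw [IndepFun_iff_Indep]
  have hdisj : Disjoint ({none} : Set (Option κ)) {none}ᶜ := disjoint_compl_right
  refine indep_of_indep_of_le_right (indep_of_indep_of_le_left
    (indep_iSup_of_disjoint (fun i => (hF i).comap_le) h.iIndep hdisj) ?_) ?_
  · exact le_iSup₂ (f := fun i (_ : i ∈ ({none} : Set (Option κ))) =>
      MeasurableSpace.comap (F i) inferInstance) none rfl
  · rw [MeasurableSpace.pi, MeasurableSpace.comap_iSup]
    refine iSup_le fun x => ?_
    rw [MeasurableSpace.comap_comp]
    exact le_iSup₂ (f := fun i (_ : i ∈ ({none}ᶜ : Set (Option κ))) =>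
      MeasurableSpace.comap (F i) inferInstance) (some x) (by simp)

theorem ProbabilityTheory.IndepFun.integral_comp_eq_sum {Ω α β : Type*} {mΩ : MeasurableSpace Ω}
    {μ : Measure Ω} [MeasurableSpace α] [MeasurableSingletonClass α] [MeasurableSpace β]
    {N : Ω → α} {Z : Ω → β} (hNZ : IndepFun N Z μ) (hN : Measurable N) (hZ : Measurable Z)
    {s : Finset α} (hs : ∀ᵐ ω ∂μ, N ω ∈ s) {Φ : α → β → ℝ} (hΦ : ∀ a ∈ s, Measurable (Φ a))
    (hint : ∀ a ∈ s, Integrable (fun ω => Φ a (Z ω)) μ) :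
    ∫ ω, Φ (N ω) (Z ω) ∂μ = ∑ a ∈ s, μ.real (N ⁻¹' {a}) * ∫ ω, Φ a (Z ω) ∂μ := by
  have hfiber : ∀ a, MeasurableSet (N ⁻¹' {a}) := fun a => hN (measurableSet_singleton a)
  have hon : ∀ a, Set.EqOn (fun ω => Φ (N ω) (Z ω)) (fun ω => Φ a (Z ω)) (N ⁻¹' {a}) :=
    fun a ω (hω : N ω = a) => by simp only [hω]
  calc ∫ ω, Φ (N ω) (Z ω) ∂μ = ∫ ω in ⋃ a ∈ s, N ⁻¹' {a}, Φ (N ω) (Z ω) ∂μ := by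
        have hcover : (⋃ a ∈ s, N ⁻¹' {a}) = N ⁻¹' s := by ext; simp
        rw [hcover, Measure.restrict_eq_self_of_ae_mem (s := N ⁻¹' s) hs]
    _ = ∑ a ∈ s, ∫ ω in N ⁻¹' {a}, Φ (N ω) (Z ω) ∂μ :=
        integral_biUnion_finset s (fun a _ => hfiber a)
          (fun a _ b _ hab => Set.disjoint_singleton.2 hab |>.preimage N)
          (fun a ha => ((hint a ha).integrableOn).congr_fun (hon a).symm (hfiber a))
    _ = ∑ a ∈ s, ∫ ω in N ⁻¹' {a}, Φ a (Z ω) ∂μ :=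
        sum_congr rfl fun a _ => setIntegral_congr_fun (hfiber a) (hon a)
    _ = ∑ a ∈ s, μ.real (N ⁻¹' {a}) * ∫ ω, Φ a (Z ω) ∂μ :=
        sum_congr rfl fun a ha => ((IndepFun_iff_Indep _ _ _).1 hNZ).setIntegral_eq_mul hN.comap_le
          hZ.aemeasurable ⟨{a}, measurableSet_singleton a, rfl⟩ (hΦ a ha).aestronglyMeasurable

theorem ProbabilityTheory.covariance_fun_sum_fun_sum_of_indepFun {Ω κ : Type*}
    {mΩ : MeasurableSpace Ω} {μ : Measure Ω} [IsFiniteMeasure μ] {a c : κ → Ω → ℝ}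
    {s : Finset κ} (ha : ∀ x ∈ s, MemLp (a x) 2 μ) (hc : ∀ x ∈ s, MemLp (c x) 2 μ)
    (hind : ∀ x ∈ s, ∀ y ∈ s, x ≠ y → IndepFun (a x) (c y) μ) :
    covariance (fun ω => ∑ x ∈ s, a x ω) (fun ω => ∑ y ∈ s, c y ω) μ =
      ∑ x ∈ s, covariance (a x) (c x) μ := by
  rw [covariance_fun_sum_fun_sum' ha hc]
  refine sum_congr rfl fun x hx => sum_eq_single_of_mem x hx fun y hy hyx => ?_
  exact (hind x hx y hy hyx.symm).covariance_eq_zero (ha x hx) (hc y hy)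

theorem ProbabilityTheory.IdentDistrib.covariance_eq {Ω Ω' : Type*} {mΩ : MeasurableSpace Ω}
    {mΩ' : MeasurableSpace Ω'} {μ : Measure Ω} {μ' : Measure Ω'} {X Y : Ω → ℝ} {X' Y' : Ω' → ℝ}
    (h : IdentDistrib (fun ω => (X ω, Y ω)) (fun ω => (X' ω, Y' ω)) μ μ') :
    covariance X Y μ = covariance X' Y' μ' := by
  have hX : μ[X] = μ'[X'] := (h.comp measurable_fst).integral_eq
  have hY : μ[Y] = μ'[Y'] := (h.comp measurable_snd).integral_eq
  rw [covariance, covariance, hX, hY]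
  exact (h.comp (u := fun v => (v.1 - μ'[X']) * (v.2 - μ'[Y'])) (by fun_prop)).integral_eq

theorem ProbabilityTheory.IdentDistrib.memLp_two_of_integrable_sq {Ω : Type*}
    {mΩ : MeasurableSpace Ω} {μ : Measure Ω} {X X₀ : Ω → ℝ} (h : IdentDistrib X X₀ μ μ)
    (hX₀ : AEStronglyMeasurable X₀ μ) (hsq : Integrable (fun ω => X₀ ω ^ 2) μ) : MemLp X 2 μ :=
  h.memLp_iff.2 ((memLp_two_iff_integrable_sq hX₀).2 hsq)

theorem integral_sum_range_add_sum_range {Ω : Type*} {mΩ : MeasurableSpace Ω} {μ : Measure Ω}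
    {U V : ℕ → Ω → ℝ} (hU : ∀ i, IdentDistrib (U i) (U 0) μ μ)
    (hV : ∀ i, IdentDistrib (V i) (V 0) μ μ)
    (hU₀ : Integrable (U 0) μ) (hV₀ : Integrable (V 0) μ) (m n : ℕ) :
    ∫ ω, (∑ i ∈ range m, U i ω + ∑ i ∈ range n, V i ω) ∂μ = m * μ[U 0] + n * μ[V 0] := by
  have hUi : ∀ i, Integrable (U i) μ := fun i => (hU i).integrable_iff.2 hU₀
  have hVi : ∀ i, Integrable (V i) μ := fun i => (hV i).integrable_iff.2 hV₀
  rw [integral_add (integrable_finsetSum _ fun i _ => hUi i)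
      (integrable_finsetSum _ fun i _ => hVi i),
    integral_finsetSum _ fun i _ => hUi i, integral_finsetSum _ fun i _ => hVi i]
  simp [(hU _).integral_eq, (hV _).integral_eq]

theorem memLp_sum_range_add_sum_range {Ω : Type*} {mΩ : MeasurableSpace Ω} {μ : Measure Ω}
    {U V : ℕ → Ω → ℝ} {q : ENNReal} (hU : ∀ i, MemLp (U i) q μ) (hV : ∀ i, MemLp (V i) q μ)
    (m n : ℕ) : MemLp (fun ω => ∑ i ∈ range m, U i ω + ∑ i ∈ range n, V i ω) q μ :=
  (memLp_finsetSum (range m) fun i _ => hU i).add (memLp_finsetSum (range n) fun i _ => hV i)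

-- The fourth category collects the trials counted by none of `B0`, `B1`, `B2`.
def countVector (t b0 b1 b2 : ℕ) : Fin 4 → ℕ := ![b0, b1, b2, t - (b0 + b1 + b2)]

theorem countVector_inj {t b0 b1 b2 c0 c1 c2 : ℕ} :
    countVector t b0 b1 b2 = countVector t c0 c1 c2 ↔ b0 = c0 ∧ b1 = c1 ∧ b2 = c2 := by
  refine ⟨fun h => ⟨congrFun h 0, congrFun h 1, congrFun h 2⟩, ?_⟩
  rintro ⟨rfl, rfl, rfl⟩
  rfl

theorem countVector_eq_of_mem_piAntidiag {t : ℕ} {k : Fin 4 → ℕ} (hk : k ∈ piAntidiag univ t) :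
    countVector t (k 0) (k 1) (k 2) = k := by
  have hsum := (mem_piAntidiag.1 hk).1
  rw [Fin.sum_univ_four] at hsum
  ext i
  fin_cases i <;> simp [countVector]
  omega

theorem countVector_mem_piAntidiag {t b0 b1 b2 : ℕ} (h : b0 + b1 + b2 ≤ t) :
    countVector t b0 b1 b2 ∈ piAntidiag univ t := by
  rw [mem_piAntidiag, Fin.sum_univ_four]
  simp [countVector]
  omega

theorem multinomialWeight_countVector (p0 p1 p2 q : ℝ) {t b0 b1 b2 : ℕ} (h : b0 + b1 + b2 ≤ t) :
    multinomialWeight ![p0, p1, p2, q] (countVector t b0 b1 b2) =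
      (Nat.factorial t : ℝ) /
          ((Nat.factorial b0 : ℝ) * (Nat.factorial b1 : ℝ) * (Nat.factorial b2 : ℝ) *
            (Nat.factorial (t - (b0 + b1 + b2)) : ℝ)) *
          (p0 ^ b0 * p1 ^ b1 * p2 ^ b2 * q ^ (t - (b0 + b1 + b2))) := by
  rw [multinomialWeight, Nat.cast_multinomial_univ, Fin.sum_univ_four, Fin.prod_univ_four,
    Fin.prod_univ_four]
  simp [countVector, Nat.add_sub_cancel' h, mul_assoc]

section IsMultinomial

variable {Ω : Type*} [MeasureSpace Ω] {t : ℕ} {p0 p1 p2 : ℝ} {B0 B1 B2 : Ω → ℕ}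

theorem IsMultinomial.ae_add_add_le [IsFiniteMeasure (ℙ : Measure Ω)]
    (h : IsMultinomial t p0 p1 p2 B0 B1 B2) : ∀ᵐ ω, B0 ω + B1 ω + B2 ω ≤ t := by
  obtain ⟨hB0, hB1, hB2, hpmf⟩ := h
  have hB : Measurable fun ω => (B0 ω, B1 ω, B2 ω) := hB0.prodMk (hB1.prodMk hB2)
  refine ae_of_ae_map (p := fun b : ℕ × ℕ × ℕ => b.1 + b.2.1 + b.2.2 ≤ t) hB.aemeasurable
    (ae_iff_of_countable.2 fun b hb => ?_)
  by_contra hbt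
  refine hb ?_
  have hnull := hpmf b.1 b.2.1 b.2.2
  rw [if_neg hbt, ENNReal.toReal_eq_zero_iff] at hnull
  rw [Measure.map_apply hB (measurableSet_singleton b)]
  convert hnull.resolve_right (measure_ne_top _ _) using 2
  ext ω
  simp [Prod.ext_iff]

theorem IsMultinomial.measureReal_preimage_countVector (h : IsMultinomial t p0 p1 p2 B0 B1 B2)
    {k : Fin 4 → ℕ} (hk : k ∈ piAntidiag univ t) :
    (ℙ : Measure Ω).real ((fun ω => countVector t (B0 ω) (B1 ω) (B2 ω)) ⁻¹' {k}) =
      multinomialWeight ![p0, p1, p2, 1 - (p0 + p1 + p2)] k := by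
  have hle : k 0 + k 1 + k 2 ≤ t := by
    have := (mem_piAntidiag.1 hk).1
    rw [Fin.sum_univ_four] at this
    omega
  have hpmf := h.2.2.2 (k 0) (k 1) (k 2)
  rw [if_pos hle] at hpmf
  rw [← countVector_eq_of_mem_piAntidiag hk, multinomialWeight_countVector _ _ _ _ hle,
    measureReal_def, ← hpmf]
  congr 2
  ext ω
  simp [countVector_inj]

theorem IsMultinomial.integral_eq_sum [IsFiniteMeasure (ℙ : Measure Ω)] {β : Type*}
    [MeasurableSpace β] (h : IsMultinomial t p0 p1 p2 B0 B1 B2) {Z : Ω → β} (hZ : Measurable Z)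
    (hind : IndepFun (fun ω => (B0 ω, B1 ω, B2 ω)) Z ℙ) {Φ : ℕ → ℕ → ℕ → β → ℝ}
    (hΦ : ∀ b0 b1 b2, Measurable (Φ b0 b1 b2))
    (hint : ∀ b0 b1 b2, Integrable (fun ω => Φ b0 b1 b2 (Z ω)) ℙ) :
    ∫ ω, Φ (B0 ω) (B1 ω) (B2 ω) (Z ω) = ∑ k ∈ piAntidiag univ t,
      multinomialWeight ![p0, p1, p2, 1 - (p0 + p1 + p2)] k * ∫ ω, Φ (k 0) (k 1) (k 2) (Z ω) := by
  have hcount : Measurable fun b : ℕ × ℕ × ℕ => countVector t b.1 b.2.1 b.2.2 :=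
    measurable_of_countable _
  have hB : Measurable fun ω => (B0 ω, B1 ω, B2 ω) := h.1.prodMk (h.2.1.prodMk h.2.2.1)
  have hdec := (hind.comp hcount measurable_id).integral_comp_eq_sum (hcount.comp hB) hZ
    (s := piAntidiag univ t) (Φ := fun k z => Φ (k 0) (k 1) (k 2) z)
    (h.ae_add_add_le.mono fun ω hω => countVector_mem_piAntidiag hω)
    (fun _ _ => hΦ _ _ _) (fun _ _ => hint _ _ _)
  rw [sum_congr rfl fun k hk => by rw [← h.measureReal_preimage_countVector hk]]
  exact hdec

end IsMultinomial

-- The family whose mutual independence is assumed: the counts, then one unit per summand.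
def compoundFamily {Ω : Type*} (B0 B1 B2 : Ω → ℕ) (Y1 Y2 Y3 Y4 : ℕ → Ω → ℝ)
    (x : Option (ℕ ⊕ ℕ ⊕ ℕ)) : Ω → ℝ × ℝ × ℝ :=
  x.elim (fun ω => ((B0 ω : ℝ), (B1 ω : ℝ), (B2 ω : ℝ)))
    (Sum.elim (fun i ω => (Y1 i ω, 0, 0))
      (Sum.elim (fun i ω => (Y2 i ω, 0, 0)) fun i ω => (Y3 i ω, Y4 i ω, 0)))

-- The contribution of a unit to `(S1, S2)`, read off its value in `compoundFamily`.
def unitValue : ℕ ⊕ ℕ ⊕ ℕ → ℝ × ℝ × ℝ → ℝ × ℝ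
  | .inl _ => fun v => (v.1, 0)
  | .inr (.inl _) => fun v => (0, v.1)
  | .inr (.inr _) => fun v => (v.1, v.2.1)

theorem measurable_unitValue (x : ℕ ⊕ ℕ ⊕ ℕ) : Measurable (unitValue x) := by
  rcases x with _ | _ | _ <;> simp only [unitValue] <;> fun_prop

section CompoundModel

variable {Ω : Type*} [MeasureSpace Ω] {B0 B1 B2 : Ω → ℕ} {Y1 Y2 Y3 Y4 : ℕ → Ω → ℝ}

theorem measurable_compoundFamily (hB0 : Measurable B0) (hB1 : Measurable B1)
    (hB2 : Measurable B2)
    (hY : ∀ i, Measurable (Y1 i) ∧ Measurable (Y2 i) ∧ Measurable (Y3 i) ∧ Measurable (Y4 i))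
    (x : Option (ℕ ⊕ ℕ ⊕ ℕ)) : Measurable (compoundFamily B0 B1 B2 Y1 Y2 Y3 Y4 x) := by
  rcases x with _ | i | i | i <;> simp only [compoundFamily, Option.elim_none, Option.elim_some,
    Sum.elim_inl, Sum.elim_inr]
  · fun_prop
  · have := (hY i).1; fun_prop
  · have := (hY i).2.1; fun_prop
  · have := (hY i).2.2.1; have := (hY i).2.2.2; fun_prop

theorem indepFun_counts_compoundFamily_some
    (hF : iIndepFun (compoundFamily B0 B1 B2 Y1 Y2 Y3 Y4) ℙ)
    (hFm : ∀ x, Measurable (compoundFamily B0 B1 B2 Y1 Y2 Y3 Y4 x)) :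
    IndepFun (fun ω => (B0 ω, B1 ω, B2 ω))
      (fun ω x => compoundFamily B0 B1 B2 Y1 Y2 Y3 Y4 (some x) ω) ℙ := by
  have hfloor : Measurable fun v : ℝ × ℝ × ℝ => (⌊v.1⌋₊, ⌊v.2.1⌋₊, ⌊v.2.2⌋₊) := by fun_prop
  simpa [Function.comp_def, compoundFamily] using
    (hF.indepFun_none_some hFm).comp hfloor measurable_id

theorem covariance_partialSums [IsFiniteMeasure (ℙ : Measure Ω)]
    (hF : iIndepFun (compoundFamily B0 B1 B2 Y1 Y2 Y3 Y4) ℙ)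
    (hL2 : ∀ i, MemLp (Y1 i) 2 ℙ ∧ MemLp (Y2 i) 2 ℙ ∧ MemLp (Y3 i) 2 ℙ ∧ MemLp (Y4 i) 2 ℙ)
    (hid34 : ∀ i, IdentDistrib (fun ω => (Y3 i ω, Y4 i ω)) (fun ω => (Y3 0 ω, Y4 0 ω)) ℙ ℙ)
    (b0 b1 b2 : ℕ) :
    covariance (fun ω => ∑ i ∈ range b1, Y1 i ω + ∑ i ∈ range b0, Y3 i ω)
      (fun ω => ∑ i ∈ range b2, Y2 i ω + ∑ i ∈ range b0, Y4 i ω) ℙ =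
      b0 * covariance (Y3 0) (Y4 0) ℙ := by
  set unit := fun x ω => unitValue x (compoundFamily B0 B1 B2 Y1 Y2 Y3 Y4 (some x) ω)
  have hmem : ∀ x, MemLp (fun ω => (unit x ω).1) 2 ℙ ∧ MemLp (fun ω => (unit x ω).2) 2 ℙ := by
    rintro (i | i | i)
    exacts [⟨(hL2 i).1, memLp_const 0⟩, ⟨memLp_const 0, (hL2 i).2.1⟩,
      ⟨(hL2 i).2.2.1, (hL2 i).2.2.2⟩]
  have hind : ∀ x y, x ≠ y → IndepFun (fun ω => (unit x ω).1) (fun ω => (unit y ω).2) ℙ :=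
    fun x y hxy => (hF.indepFun (Option.some_injective _ |>.ne hxy)).comp
      (measurable_fst.comp (measurable_unitValue x)) (measurable_snd.comp (measurable_unitValue y))
  have hsum := covariance_fun_sum_fun_sum_of_indepFun
    (s := (range b1).disjSum ((range b2).disjSum (range b0))) (fun x _ => (hmem x).1)
    (fun x _ => (hmem x).2) (fun x _ y _ => hind x y)
  simp only [sum_disjSum] at hsum
  convert hsum using 1
  · congr 1 <;> ext ω <;> simp [unit, unitValue, compoundFamily]
  · have hcov_zero_right : ∀ X : Ω → ℝ, covariance X (fun _ => 0) ℙ = 0 := fun X => by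
      simp [covariance]
    have hcov_zero_left : ∀ X : Ω → ℝ, covariance (fun _ => 0) X ℙ = 0 := fun X => by
      simp [covariance]
    simp [unit, unitValue, compoundFamily, hcov_zero_left, hcov_zero_right,
      fun i => (hid34 i).covariance_eq]

theorem integral_partialSums_mul [IsProbabilityMeasure (ℙ : Measure Ω)]
    (hF : iIndepFun (compoundFamily B0 B1 B2 Y1 Y2 Y3 Y4) ℙ)
    (hL2 : ∀ i, MemLp (Y1 i) 2 ℙ ∧ MemLp (Y2 i) 2 ℙ ∧ MemLp (Y3 i) 2 ℙ ∧ MemLp (Y4 i) 2 ℙ)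
    (hid34 : ∀ i, IdentDistrib (fun ω => (Y3 i ω, Y4 i ω)) (fun ω => (Y3 0 ω, Y4 0 ω)) ℙ ℙ)
    (b0 b1 b2 : ℕ) :
    ∫ ω, (∑ i ∈ range b1, Y1 i ω + ∑ i ∈ range b0, Y3 i ω) *
        (∑ i ∈ range b2, Y2 i ω + ∑ i ∈ range b0, Y4 i ω) =
      (∫ ω, (∑ i ∈ range b1, Y1 i ω + ∑ i ∈ range b0, Y3 i ω)) *
        (∫ ω, (∑ i ∈ range b2, Y2 i ω + ∑ i ∈ range b0, Y4 i ω)) +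
      b0 * covariance (Y3 0) (Y4 0) ℙ := by
  have hcov := covariance_eq_sub
    (memLp_sum_range_add_sum_range (fun i => (hL2 i).1) (fun i => (hL2 i).2.2.1) b1 b0)
    (memLp_sum_range_add_sum_range (fun i => (hL2 i).2.1) (fun i => (hL2 i).2.2.2) b2 b0)
  rw [covariance_partialSums hF hL2 hid34] at hcov
  simp only [Pi.mul_apply] at hcov
  linarith

theorem integral_comp_compoundSums_eq_sum [IsFiniteMeasure (ℙ : Measure Ω)] {t : ℕ}
    {p0 p1 p2 : ℝ} (hmult : IsMultinomial t p0 p1 p2 B0 B1 B2)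
    (hF : iIndepFun (compoundFamily B0 B1 B2 Y1 Y2 Y3 Y4) ℙ)
    (hFm : ∀ x, Measurable (compoundFamily B0 B1 B2 Y1 Y2 Y3 Y4 x)) {g : ℝ → ℝ → ℝ}
    (hg : Measurable (Function.uncurry g))
    (hint : ∀ b0 b1 b2 : ℕ, Integrable (fun ω => g (∑ i ∈ range b1, Y1 i ω + ∑ i ∈ range b0, Y3 i ω)
      (∑ i ∈ range b2, Y2 i ω + ∑ i ∈ range b0, Y4 i ω)) ℙ) :
    ∫ ω, g (∑ i ∈ range (B1 ω), Y1 i ω + ∑ i ∈ range (B0 ω), Y3 i ω)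
        (∑ i ∈ range (B2 ω), Y2 i ω + ∑ i ∈ range (B0 ω), Y4 i ω) =
      ∑ k ∈ piAntidiag univ t, multinomialWeight ![p0, p1, p2, 1 - (p0 + p1 + p2)] k *
        ∫ ω, g (∑ i ∈ range (k 1), Y1 i ω + ∑ i ∈ range (k 0), Y3 i ω)
          (∑ i ∈ range (k 2), Y2 i ω + ∑ i ∈ range (k 0), Y4 i ω) :=
  hmult.integral_eq_sum (measurable_pi_lambda _ fun x => hFm (some x))
    (indepFun_counts_compoundFamily_some hF hFm)
    (Φ := fun b0 b1 b2 z =>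
      g (∑ i ∈ range b1, (z (.inl i)).1 + ∑ i ∈ range b0, (z (.inr (.inr i))).1)
        (∑ i ∈ range b2, (z (.inr (.inl i))).1 + ∑ i ∈ range b0, (z (.inr (.inr i))).2.1))
    (fun _ _ _ => by fun_prop) hint

theorem integral_compoundSum_left [IsFiniteMeasure (ℙ : Measure Ω)] {t : ℕ} {p0 p1 p2 : ℝ}
    (hmult : IsMultinomial t p0 p1 p2 B0 B1 B2)
    (hF : iIndepFun (compoundFamily B0 B1 B2 Y1 Y2 Y3 Y4) ℙ)
    (hFm : ∀ x, Measurable (compoundFamily B0 B1 B2 Y1 Y2 Y3 Y4 x))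
    (hid1 : ∀ i, IdentDistrib (Y1 i) (Y1 0) ℙ ℙ) (hid3 : ∀ i, IdentDistrib (Y3 i) (Y3 0) ℙ ℙ)
    (h1 : Integrable (Y1 0) ℙ) (h3 : Integrable (Y3 0) ℙ) :
    ∫ ω, (∑ i ∈ range (B1 ω), Y1 i ω + ∑ i ∈ range (B0 ω), Y3 i ω) =
      t * (p1 * (∫ ω, Y1 0 ω) + p0 * (∫ ω, Y3 0 ω)) := by
  have hint : ∀ m n, Integrable (fun ω => ∑ i ∈ range m, Y1 i ω + ∑ i ∈ range n, Y3 i ω) ℙ :=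
    fun m n => (integrable_finsetSum _ fun i _ => (hid1 i).integrable_iff.2 h1).add
      (integrable_finsetSum _ fun i _ => (hid3 i).integrable_iff.2 h3)
  rw [integral_comp_compoundSums_eq_sum hmult hF hFm (g := fun x _ => x) measurable_fst
    fun b0 b1 _ => hint b1 b0]
  calc _ = ∑ k ∈ piAntidiag univ t, multinomialWeight ![p0, p1, p2, 1 - (p0 + p1 + p2)] k *
        ∑ i, ![∫ ω, Y3 0 ω, ∫ ω, Y1 0 ω, 0, 0] i * k i :=
        sum_congr rfl fun k _ => by
          rw [integral_sum_range_add_sum_range hid1 hid3 h1 h3]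
          simp only [Fin.sum_univ_four, Fin.isValue, Matrix.cons_val_zero, Matrix.cons_val_one,
            Matrix.cons_val]
          ring
    _ = _ := by
        rw [sum_multinomialWeight_mul_linear]
        simp only [Fin.sum_univ_four, Fin.isValue, Matrix.cons_val_zero, Matrix.cons_val_one,
          Matrix.cons_val]
        ring

theorem integral_compoundSum_right [IsFiniteMeasure (ℙ : Measure Ω)] {t : ℕ} {p0 p1 p2 : ℝ}
    (hmult : IsMultinomial t p0 p1 p2 B0 B1 B2)
    (hF : iIndepFun (compoundFamily B0 B1 B2 Y1 Y2 Y3 Y4) ℙ)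
    (hFm : ∀ x, Measurable (compoundFamily B0 B1 B2 Y1 Y2 Y3 Y4 x))
    (hid2 : ∀ i, IdentDistrib (Y2 i) (Y2 0) ℙ ℙ) (hid4 : ∀ i, IdentDistrib (Y4 i) (Y4 0) ℙ ℙ)
    (h2 : Integrable (Y2 0) ℙ) (h4 : Integrable (Y4 0) ℙ) :
    ∫ ω, (∑ i ∈ range (B2 ω), Y2 i ω + ∑ i ∈ range (B0 ω), Y4 i ω) =
      t * (p2 * (∫ ω, Y2 0 ω) + p0 * (∫ ω, Y4 0 ω)) := by
  have hint : ∀ m n, Integrable (fun ω => ∑ i ∈ range m, Y2 i ω + ∑ i ∈ range n, Y4 i ω) ℙ :=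
    fun m n => (integrable_finsetSum _ fun i _ => (hid2 i).integrable_iff.2 h2).add
      (integrable_finsetSum _ fun i _ => (hid4 i).integrable_iff.2 h4)
  rw [integral_comp_compoundSums_eq_sum hmult hF hFm (g := fun _ y => y) measurable_snd
    fun b0 _ b2 => hint b2 b0]
  calc _ = ∑ k ∈ piAntidiag univ t, multinomialWeight ![p0, p1, p2, 1 - (p0 + p1 + p2)] k *
        ∑ i, ![∫ ω, Y4 0 ω, 0, ∫ ω, Y2 0 ω, 0] i * k i :=
        sum_congr rfl fun k _ => by
          rw [integral_sum_range_add_sum_range hid2 hid4 h2 h4]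
          simp only [Fin.sum_univ_four, Fin.isValue, Matrix.cons_val_zero, Matrix.cons_val_one,
            Matrix.cons_val]
          ring
    _ = _ := by
        rw [sum_multinomialWeight_mul_linear]
        simp only [Fin.sum_univ_four, Fin.isValue, Matrix.cons_val_zero, Matrix.cons_val_one,
          Matrix.cons_val]
        ring

theorem integral_compoundSum_mul [IsProbabilityMeasure (ℙ : Measure Ω)] {t : ℕ} {p0 p1 p2 : ℝ}
    (hmult : IsMultinomial t p0 p1 p2 B0 B1 B2)
    (hF : iIndepFun (compoundFamily B0 B1 B2 Y1 Y2 Y3 Y4) ℙ)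
    (hFm : ∀ x, Measurable (compoundFamily B0 B1 B2 Y1 Y2 Y3 Y4 x))
    (hL2 : ∀ i, MemLp (Y1 i) 2 ℙ ∧ MemLp (Y2 i) 2 ℙ ∧ MemLp (Y3 i) 2 ℙ ∧ MemLp (Y4 i) 2 ℙ)
    (hid1 : ∀ i, IdentDistrib (Y1 i) (Y1 0) ℙ ℙ) (hid2 : ∀ i, IdentDistrib (Y2 i) (Y2 0) ℙ ℙ)
    (hid34 : ∀ i, IdentDistrib (fun ω => (Y3 i ω, Y4 i ω)) (fun ω => (Y3 0 ω, Y4 0 ω)) ℙ ℙ) :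
    ∫ ω, (∑ i ∈ range (B1 ω), Y1 i ω + ∑ i ∈ range (B0 ω), Y3 i ω) *
        (∑ i ∈ range (B2 ω), Y2 i ω + ∑ i ∈ range (B0 ω), Y4 i ω) =
      t * p0 * (∫ ω, Y3 0 ω * Y4 0 ω) +
        t * (t - 1) * (p1 * (∫ ω, Y1 0 ω) + p0 * (∫ ω, Y3 0 ω)) *
          (p2 * (∫ ω, Y2 0 ω) + p0 * (∫ ω, Y4 0 ω)) := by
  have hint : ∀ b0 b1 b2 : ℕ, Integrable (fun ω =>
      (∑ i ∈ range b1, Y1 i ω + ∑ i ∈ range b0, Y3 i ω) *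
        (∑ i ∈ range b2, Y2 i ω + ∑ i ∈ range b0, Y4 i ω)) ℙ := fun b0 b1 b2 =>
    MemLp.integrable_mul
      (memLp_sum_range_add_sum_range (fun i => (hL2 i).1) (fun i => (hL2 i).2.2.1) b1 b0)
      (memLp_sum_range_add_sum_range (fun i => (hL2 i).2.1) (fun i => (hL2 i).2.2.2) b2 b0)
  have hid3 : ∀ i, IdentDistrib (Y3 i) (Y3 0) ℙ ℙ := fun i => (hid34 i).comp measurable_fst
  have hid4 : ∀ i, IdentDistrib (Y4 i) (Y4 0) ℙ ℙ := fun i => (hid34 i).comp measurable_snd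
  have hmean := integral_sum_range_add_sum_range hid1 hid3 ((hL2 0).1.integrable one_le_two)
    ((hL2 0).2.2.1.integrable one_le_two)
  have hmean' := integral_sum_range_add_sum_range hid2 hid4 ((hL2 0).2.1.integrable one_le_two)
    ((hL2 0).2.2.2.integrable one_le_two)
  have hcov := covariance_eq_sub (hL2 0).2.2.1 (hL2 0).2.2.2
  have hpred : (t : ℝ) * ((t - 1 : ℕ) : ℝ) = t * (t - 1) := by cases t <;> simp
  rw [integral_comp_compoundSums_eq_sum hmult hF hFm (g := (· * ·)) (by fun_prop) hint]
  calc _ = ∑ k ∈ piAntidiag univ t, multinomialWeight ![p0, p1, p2, 1 - (p0 + p1 + p2)] k *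
          ((∑ i, ![∫ ω, Y3 0 ω, ∫ ω, Y1 0 ω, 0, 0] i * k i) *
            ∑ i, ![∫ ω, Y4 0 ω, 0, ∫ ω, Y2 0 ω, 0] i * k i) +
        ∑ k ∈ piAntidiag univ t, multinomialWeight ![p0, p1, p2, 1 - (p0 + p1 + p2)] k *
          ∑ i, ![covariance (Y3 0) (Y4 0) ℙ, 0, 0, 0] i * k i := by
        rw [← sum_add_distrib]
        refine sum_congr rfl fun k _ => ?_
        rw [integral_partialSums_mul hF hL2 hid34, hmean, hmean']
        simp only [Fin.sum_univ_four, Fin.isValue, Matrix.cons_val_zero, Matrix.cons_val_one,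
          Matrix.cons_val]
        ring
    _ = _ := by
        rw [sum_multinomialWeight_mul_linear_mul_linear, sum_multinomialWeight_mul_linear, hpred,
          hcov]
        simp only [Fin.sum_univ_four, Fin.isValue, Matrix.cons_val_zero, Matrix.cons_val_one,
          Matrix.cons_val, Pi.mul_apply]
        ring

end CompoundModel

theorem cross_moment_and_covariance_of_compound_multinomial
    {Ω : Type*} [MeasureSpace Ω] [IsProbabilityMeasure (ℙ : Measure Ω)]
    (t : ℕ) (p0 p1 p2 : ℝ)
    (B0 B1 B2 : Ω → ℕ) (hmult : IsMultinomial t p0 p1 p2 B0 B1 B2)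
    (Y1 Y2 Y3 Y4 : ℕ → Ω → ℝ)
    (hmeas : ∀ i, Measurable (Y1 i) ∧ Measurable (Y2 i) ∧ Measurable (Y3 i) ∧ Measurable (Y4 i))
    (hid1 : ∀ i, IdentDistrib (Y1 i) (Y1 0) ℙ ℙ)
    (hid2 : ∀ i, IdentDistrib (Y2 i) (Y2 0) ℙ ℙ)
    (hid34 : ∀ i, IdentDistrib (fun ω => (Y3 i ω, Y4 i ω)) (fun ω => (Y3 0 ω, Y4 0 ω)) ℙ ℙ)
    (hindep : iIndepFun
      (fun i : Option (ℕ ⊕ ℕ ⊕ ℕ) => (match i with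
        | none => fun ω => ((B0 ω : ℝ), (B1 ω : ℝ), (B2 ω : ℝ))
        | some (.inl i) => fun ω => (Y1 i ω, 0, 0)
        | some (.inr (.inl i)) => fun ω => (Y2 i ω, 0, 0)
        | some (.inr (.inr i)) => fun ω => (Y3 i ω, Y4 i ω, 0) : Ω → ℝ × ℝ × ℝ)) ℙ)
    (hint1 : Integrable (fun ω => Y1 0 ω ^ 2) ℙ) (hint2 : Integrable (fun ω => Y2 0 ω ^ 2) ℙ)
    (hint3 : Integrable (fun ω => Y3 0 ω ^ 2) ℙ) (hint4 : Integrable (fun ω => Y4 0 ω ^ 2) ℙ) :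
    (∫ ω, (∑ i ∈ Finset.range (B1 ω), Y1 i ω + ∑ i ∈ Finset.range (B0 ω), Y3 i ω) *
          (∑ i ∈ Finset.range (B2 ω), Y2 i ω + ∑ i ∈ Finset.range (B0 ω), Y4 i ω) ∂ℙ) =
      t * p0 * (∫ ω, Y3 0 ω * Y4 0 ω ∂ℙ) +
        t * (t - 1) * (p1 * (∫ ω, Y1 0 ω ∂ℙ) + p0 * (∫ ω, Y3 0 ω ∂ℙ)) *
          (p2 * (∫ ω, Y2 0 ω ∂ℙ) + p0 * (∫ ω, Y4 0 ω ∂ℙ)) ∧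
    (∫ ω, (∑ i ∈ Finset.range (B1 ω), Y1 i ω + ∑ i ∈ Finset.range (B0 ω), Y3 i ω) *
          (∑ i ∈ Finset.range (B2 ω), Y2 i ω + ∑ i ∈ Finset.range (B0 ω), Y4 i ω) ∂ℙ) -
      (∫ ω, (∑ i ∈ Finset.range (B1 ω), Y1 i ω + ∑ i ∈ Finset.range (B0 ω), Y3 i ω) ∂ℙ) *
      (∫ ω, (∑ i ∈ Finset.range (B2 ω), Y2 i ω + ∑ i ∈ Finset.range (B0 ω), Y4 i ω) ∂ℙ) =
      t * (p0 * (∫ ω, Y3 0 ω * Y4 0 ω ∂ℙ) -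
        (p1 * (∫ ω, Y1 0 ω ∂ℙ) + p0 * (∫ ω, Y3 0 ω ∂ℙ)) *
        (p2 * (∫ ω, Y2 0 ω ∂ℙ) + p0 * (∫ ω, Y4 0 ω ∂ℙ))) := by
  have hF : iIndepFun (compoundFamily B0 B1 B2 Y1 Y2 Y3 Y4) ℙ := by
    convert hindep using 1
    funext x
    rcases x with _ | _ | _ | _ <;> rfl
  have hFm := measurable_compoundFamily hmult.1 hmult.2.1 hmult.2.2.1 hmeas
  have hid3 : ∀ i, IdentDistrib (Y3 i) (Y3 0) ℙ ℙ := fun i => (hid34 i).comp measurable_fst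
  have hid4 : ∀ i, IdentDistrib (Y4 i) (Y4 0) ℙ ℙ := fun i => (hid34 i).comp measurable_snd
  have hL2 : ∀ i, MemLp (Y1 i) 2 ℙ ∧ MemLp (Y2 i) 2 ℙ ∧ MemLp (Y3 i) 2 ℙ ∧ MemLp (Y4 i) 2 ℙ :=
    fun i => ⟨(hid1 i).memLp_two_of_integrable_sq (hmeas 0).1.aestronglyMeasurable hint1,
      (hid2 i).memLp_two_of_integrable_sq (hmeas 0).2.1.aestronglyMeasurable hint2,
      (hid3 i).memLp_two_of_integrable_sq (hmeas 0).2.2.1.aestronglyMeasurable hint3,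
      (hid4 i).memLp_two_of_integrable_sq (hmeas 0).2.2.2.aestronglyMeasurable hint4⟩
  have hcross := integral_compoundSum_mul hmult hF hFm hL2 hid1 hid2 hid34
  refine ⟨hcross, ?_⟩
  rw [hcross, integral_compoundSum_left hmult hF hFm hid1 hid3 ((hL2 0).1.integrable one_le_two)
      ((hL2 0).2.2.1.integrable one_le_two),
    integral_compoundSum_right hmult hF hFm hid2 hid4 ((hL2 0).2.1.integrable one_le_two)
      ((hL2 0).2.2.2.integrable one_le_two)]
  ring
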